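/- arXiv:math/0302340 — 2 statements merged into one kernel-verified Lean document; each statement's English description precedes it below -/
import Mathlib

section
/- Let ℤ act on X₀ = ℂ² ∖ {0} (with its subspace topology from ℂ²) by k · v = 2^k v. Then the orbit space X₀/ℤ, equipped with the quotient topology, is homeomorphic to S³ × S¹, where S³ is the unit sphere of ℂ² (with respect to the Euclidean norm) and S¹ is the unit circle in ℂ. -/
noncomputable section

/-- `ℂ²` with the Euclidean norm. -/
abbrev E : Type := EuclideanSpace ℂ (Fin 2)

/-- `X₀ = ℂ² ∖ {0}` with the subspace topology. -/
abbrev X₀ : Type := {v : E // v ≠ 0}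

/-- The orbit relation of the `ℤ`-action `k • v = 2^k v` on `X₀`. -/
def orbitRel₂ (v w : X₀) : Prop := ∃ k : ℤ, ((2 : ℝ) ^ k) • (v : E) = (w : E)

open Real

lemma QSP.norm_pos (v : X₀) : (0 : ℝ) < ‖(v : E)‖ := norm_pos_iff.2 v.2

/-- The map `v ↦ (v / ‖v‖, exp(2π i log₂ ‖v‖))`. -/
def QSP.F (v : X₀) : Metric.sphere (0 : E) 1 × Circle :=
  (⟨‖(v : E)‖⁻¹ • (v : E), by
      rw [mem_sphere_zero_iff_norm, norm_smul, norm_inv, norm_norm,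
        inv_mul_cancel₀ (QSP.norm_pos v).ne']⟩,
    Circle.exp (2 * π * Real.logb 2 ‖(v : E)‖))

lemma QSP.continuous_F : Continuous QSP.F := by
  have hnorm : Continuous fun v : X₀ => ‖(v : E)‖ := continuous_subtype_val.norm
  have hne : ∀ v : X₀, ‖(v : E)‖ ≠ 0 := fun v => (QSP.norm_pos v).ne'
  refine Continuous.prodMk ?_ ?_
  · exact Continuous.subtype_mk ((hnorm.inv₀ hne).smul continuous_subtype_val) _
  · refine Circle.exp.continuous.comp ?_
    have hlog : Continuous fun v : X₀ => Real.logb 2 ‖(v : E)‖ := by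
      simp only [Real.logb]
      exact (hnorm.log hne).div_const _
    exact continuous_const.mul hlog

lemma QSP.norm_eq {v w : X₀} (k : ℤ) (hk : ((2 : ℝ) ^ k) • (v : E) = (w : E)) :
    ‖(w : E)‖ = (2 : ℝ) ^ k * ‖(v : E)‖ := by
  have h2 : (0 : ℝ) < (2 : ℝ) ^ k := zpow_pos (by norm_num) k
  rw [← hk, norm_smul, Real.norm_eq_abs, abs_of_pos h2]

lemma QSP.F_invariant : ∀ v w : X₀, orbitRel₂ v w → QSP.F v = QSP.F w := by
  rintro v w ⟨k, hk⟩
  have h2 : (0 : ℝ) < (2 : ℝ) ^ k := zpow_pos (by norm_num) k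
  have hnw : ‖(w : E)‖ = (2 : ℝ) ^ k * ‖(v : E)‖ := QSP.norm_eq k hk
  refine Prod.ext (Subtype.ext ?_) ?_
  · show ‖(v : E)‖⁻¹ • (v : E) = ‖(w : E)‖⁻¹ • (w : E)
    rw [hnw, ← hk, smul_smul, mul_inv]
    congr 1
    rw [mul_comm (((2 : ℝ) ^ k)⁻¹), mul_assoc, inv_mul_cancel₀ h2.ne', mul_one]
  · show Circle.exp _ = Circle.exp _
    have hlogb : Real.logb 2 ‖(w : E)‖ = k + Real.logb 2 ‖(v : E)‖ := by
      rw [hnw, Real.logb_mul h2.ne' (QSP.norm_pos v).ne', ← Real.rpow_intCast (2 : ℝ) k,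
        Real.logb_rpow (by norm_num) (by norm_num)]
    rw [hlogb, Circle.exp_eq_exp]
    exact ⟨-k, by push_cast; ring⟩

lemma QSP.F_injective_aux {v w : X₀} (h : QSP.F v = QSP.F w) : orbitRel₂ w v := by
  have h1 : ‖(v : E)‖⁻¹ • (v : E) = ‖(w : E)‖⁻¹ • (w : E) :=
    congrArg Subtype.val (congrArg Prod.fst h)
  have h2 := congrArg Prod.snd h
  simp only [QSP.F, Circle.exp_eq_exp] at h2
  obtain ⟨m, hm⟩ := h2
  have hpi : (2 : ℝ) * π ≠ 0 := by positivity
  have hlog : Real.logb 2 ‖(v : E)‖ = Real.logb 2 ‖(w : E)‖ + m := by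
    have : 2 * π * Real.logb 2 ‖(v : E)‖ = 2 * π * (Real.logb 2 ‖(w : E)‖ + m) := by
      rw [hm]; ring
    exact mul_left_cancel₀ hpi this
  have hnv : ‖(v : E)‖ = (2 : ℝ) ^ (m : ℤ) * ‖(w : E)‖ := by
    have hv := Real.rpow_logb (b := 2) (by norm_num) (by norm_num) (QSP.norm_pos v)
    have hw := Real.rpow_logb (b := 2) (by norm_num) (by norm_num) (QSP.norm_pos w)
    rw [← hv, hlog, Real.rpow_add (by norm_num), hw, mul_comm, Real.rpow_intCast]
  refine ⟨m, ?_⟩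
  have hv : (v : E) = ‖(v : E)‖ • (‖(v : E)‖⁻¹ • (v : E)) := by
    rw [smul_smul, mul_inv_cancel₀ (QSP.norm_pos v).ne', one_smul]
  have hw : ‖(w : E)‖ • (‖(w : E)‖⁻¹ • (w : E)) = (w : E) := by
    rw [smul_smul, mul_inv_cancel₀ (QSP.norm_pos w).ne', one_smul]
  calc ((2 : ℝ) ^ (m : ℤ)) • (w : E)
      = ((2 : ℝ) ^ (m : ℤ)) • (‖(w : E)‖ • (‖(w : E)‖⁻¹ • (w : E))) := by rw [hw]
    _ = ‖(v : E)‖ • (‖(v : E)‖⁻¹ • (v : E)) := by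
        rw [h1, smul_smul, ← hnv]
    _ = (v : E) := hv.symm

lemma QSP.F_surjective_aux (u : Metric.sphere (0 : E) 1) (z : Circle) :
    ∃ v : X₀, QSP.F v = (u, z) := by
  have hu : ‖(u : E)‖ = 1 := mem_sphere_zero_iff_norm.1 u.2
  set t : ℝ := Complex.arg (z : ℂ) / (2 * π) with ht
  have h2t : (0 : ℝ) < (2 : ℝ) ^ t := Real.rpow_pos_of_pos (by norm_num) t
  have hu0 : (u : E) ≠ 0 := by
    intro h; rw [h, norm_zero] at hu; norm_num at hu
  refine ⟨⟨((2 : ℝ) ^ t) • (u : E), by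
    intro h
    rcases smul_eq_zero.1 h with h' | h'
    · exact h2t.ne' h'
    · exact hu0 h'⟩, ?_⟩
  have hnv : ‖((2 : ℝ) ^ t) • (u : E)‖ = (2 : ℝ) ^ t := by
    rw [norm_smul, Real.norm_eq_abs, abs_of_pos h2t, hu, mul_one]
  refine Prod.ext (Subtype.ext ?_) ?_
  · show ‖_‖⁻¹ • _ = (u : E)
    rw [hnv, smul_smul, inv_mul_cancel₀ h2t.ne', one_smul]
  · show Circle.exp (2 * π * Real.logb 2 ‖_‖) = z
    rw [hnv, Real.logb_rpow (by norm_num) (by norm_num), ht,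
      mul_div_cancel₀ _ (by positivity : (2 : ℝ) * π ≠ 0)]
    exact Circle.exp_arg z

/-- A compact "annulus" parameterization showing the quotient is compact. -/
lemma QSP.compactSpace : CompactSpace (Quot orbitRel₂) := by
  set K : Type := Metric.sphere (0 : E) 1 × Set.Icc (0 : ℝ) 1 with hK
  have hmap : ∀ p : K, ((2 : ℝ) ^ (p.2 : ℝ)) • (p.1 : E) ≠ 0 := by
    rintro ⟨u, t⟩
    have hu : ‖(u : E)‖ = 1 := mem_sphere_zero_iff_norm.1 u.2
    have hu0 : (u : E) ≠ 0 := by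
      intro h; rw [h, norm_zero] at hu; norm_num at hu
    intro h
    rcases smul_eq_zero.1 h with h' | h'
    · exact (Real.rpow_pos_of_pos (by norm_num) _).ne' h'
    · exact hu0 h'
  set g : K → Quot orbitRel₂ := fun p =>
    Quot.mk _ ⟨((2 : ℝ) ^ (p.2 : ℝ)) • (p.1 : E), hmap p⟩ with hg
  have hgc : Continuous g := by
    apply Continuous.comp (continuous_quot_mk)
    apply Continuous.subtype_mk
    have h2 : Continuous fun p : K => (2 : ℝ) ^ (p.2 : ℝ) := by
      have : (fun p : K => (2 : ℝ) ^ (p.2 : ℝ)) =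
          fun p : K => Real.exp ((p.2 : ℝ) * Real.log 2) := by
        funext p
        rw [Real.rpow_def_of_pos (by norm_num), mul_comm]
      rw [this]
      exact Real.continuous_exp.comp
        ((continuous_subtype_val.comp continuous_snd).mul continuous_const)
    exact h2.smul (continuous_subtype_val.comp continuous_fst)
  have hgs : Function.Surjective g := by
    intro q
    induction q using Quot.ind with
    | mk v =>
      have hv : (0 : ℝ) < ‖(v : E)‖ := QSP.norm_pos v
      set s : ℝ := Real.logb 2 ‖(v : E)‖ with hs
      set t : ℝ := Int.fract s with htdef
      have ht0 : 0 ≤ t := Int.fract_nonneg s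
      have ht1 : t ≤ 1 := le_of_lt (Int.fract_lt_one s)
      have hu : ‖(v : E)‖⁻¹ • (v : E) ∈ Metric.sphere (0 : E) 1 := by
        rw [mem_sphere_zero_iff_norm, norm_smul, norm_inv, norm_norm,
          inv_mul_cancel₀ hv.ne']
      refine ⟨(⟨_, hu⟩, ⟨t, ht0, ht1⟩), ?_⟩
      apply Quot.sound
      refine ⟨⌊s⌋, ?_⟩
      show ((2 : ℝ) ^ (⌊s⌋ : ℤ)) • (((2 : ℝ) ^ t) • (‖(v : E)‖⁻¹ • (v : E))) = (v : E)
      have hns : ‖(v : E)‖ = (2 : ℝ) ^ s :=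
        (Real.rpow_logb (by norm_num) (by norm_num) hv).symm
      rw [smul_smul, smul_smul, ← Real.rpow_intCast (2 : ℝ) ⌊s⌋,
        ← Real.rpow_add (by norm_num), htdef]
      have : (⌊s⌋ : ℝ) + Int.fract s = s := by
        rw [Int.fract]; ring
      rw [this, ← hns, mul_inv_cancel₀ hv.ne', one_smul]
  have hrange : Set.range g = Set.univ := Set.range_eq_univ.2 hgs
  constructor
  rw [← hrange]
  exact isCompact_range hgc

/-- The orbit space `(ℂ² ∖ {0}) / ℤ` of the action `k • v = 2^k v`, with the quotient
topology, is homeomorphic to `S³ × S¹`. -/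
theorem quot_homeomorph_sphere_prod_circle :
    Nonempty (Quot orbitRel₂ ≃ₜ Metric.sphere (0 : E) 1 × Circle) := by
  have : CompactSpace (Quot orbitRel₂) := QSP.compactSpace
  set Fbar : Quot orbitRel₂ → Metric.sphere (0 : E) 1 × Circle :=
    Quot.lift QSP.F QSP.F_invariant with hFbar
  have hc : Continuous Fbar := continuous_quot_lift _ QSP.continuous_F
  have hbij : Function.Bijective Fbar := by
    constructor
    · intro a b
      induction a using Quot.ind with
      | mk v =>
        induction b using Quot.ind with
        | mk w =>
          intro h
          exact (Quot.sound (QSP.F_injective_aux h)).symm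
    · rintro ⟨u, z⟩
      obtain ⟨v, hv⟩ := QSP.F_surjective_aux u z
      exact ⟨Quot.mk _ v, hv⟩
  exact ⟨(Continuous.homeoOfEquivCompactToT2 (f := Equiv.ofBijective Fbar hbij) hc)⟩
end
end

section
/- Let ℤ act on X₀ = ℂ² ∖ {0} (with its subspace topology from ℂ²) by k · v = 2^k v, and let g : X₀ → OnePoint ℂ be the map sending (z, w) to z/w when w ≠ 0 and to the point ∞ when w = 0 (so g identifies the Riemann sphere OnePoint ℂ with the complex projective line ℙ¹(ℂ)). Then g is continuous and invariant under the ℤ-action, hence descends to a continuous surjective map f from the orbit space X₀/ℤ (with the quotient topology) onto OnePoint ℂ; moreover every fiber f⁻¹(p), p ∈ OnePoint ℂ, with its subspace topology, is homeomorphic to the torus S¹ × S¹. -/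
open OnePoint

noncomputable section

/-- The map `X₀ → OnePoint ℂ = ℙ¹(ℂ)` sending `(z, w)` to `z / w` when `w ≠ 0` and to `∞`
when `w = 0`. -/
def g (v : X₀) : OnePoint ℂ :=
  if (v : E) 1 = 0 then ∞ else (((v : E) 0 / (v : E) 1 : ℂ) : OnePoint ℂ)

/-!
In homogeneous coordinates `g` is the ratio map `[z : w] ↦ z / w`, which is continuous on `ℂ² ∖ 0`
and constant on `ℂ*`-orbits, in particular on `2^ℤ`-orbits. The map `v ↦ (v / ‖v‖, log₂ ‖v‖ mod 1)`
is continuous and identifies exactly the `2^ℤ`-orbits, so the orbit space is Hausdorff. The fibre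
of `g` over `p` is `ℂ* · u` for homogeneous coordinates `u` of `p`, and `(a, t) ↦ 2^t a u` induces
a continuous bijection from the compact torus `S¹ × ℝ/ℤ` onto the fibre of the descended map,
hence a homeomorphism.
-/

open Filter Topology

lemma Topology.IsQuotientMap.nonempty_homeomorph_of_eq_iff {A B C : Type*}
    [TopologicalSpace A] [TopologicalSpace B] [TopologicalSpace C] [CompactSpace B] [T2Space C]
    {π : A → B} {Φ : A → C} (hπ : IsQuotientMap π) (hΦ : Continuous Φ)
    (hΦs : Function.Surjective Φ) (hker : ∀ x y, Φ x = Φ y ↔ π x = π y) :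
    Nonempty (B ≃ₜ C) := by
  have hfac : Function.FactorsThrough Φ π := fun x y => (hker x y).2
  set F := IsQuotientMap.lift (f := ⟨π, hπ.continuous⟩) hπ ⟨Φ, hΦ⟩ hfac
  have hF : ∀ x, F (π x) = Φ x :=
    DFunLike.congr_fun (IsQuotientMap.lift_comp (f := ⟨π, hπ.continuous⟩) hπ ⟨Φ, hΦ⟩ hfac)
  have hinj : Function.Injective F := by
    intro b b' h
    obtain ⟨x, rfl⟩ := hπ.surjective b
    obtain ⟨y, rfl⟩ := hπ.surjective b'
    rwa [hF, hF, hker] at h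
  have hsurj : Function.Surjective F := by
    intro c
    obtain ⟨x, rfl⟩ := hΦs c
    exact ⟨π x, hF x⟩
  exact ⟨Continuous.homeoOfEquivCompactToT2 (f := Equiv.ofBijective F ⟨hinj, hsurj⟩) F.continuous⟩

section ProjRatio

variable {K : Type*} [NormedField K]

def homCoord (p : OnePoint K) : K × K := OnePoint.elim p (1, 0) fun z => (z, 1)

lemma homCoord_ne_zero (p : OnePoint K) : homCoord p ≠ 0 := by
  induction p using OnePoint.rec <;> simp [homCoord, Prod.ext_iff]

variable [DecidableEq K]

def projRatio (q : K × K) : OnePoint K := if q.2 = 0 then ∞ else ↑(q.1 / q.2)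

lemma projRatio_homCoord (p : OnePoint K) : projRatio (homCoord p) = p := by
  induction p using OnePoint.rec <;> simp [homCoord, projRatio]

lemma projRatio_smul {c : K} (hc : c ≠ 0) (q : K × K) : projRatio (c • q) = projRatio q := by
  simp [projRatio, hc, mul_div_mul_left]

lemma exists_eq_smul_homCoord {q : K × K} (hq : q ≠ 0) :
    ∃ c ≠ (0 : K), q = c • homCoord (projRatio q) := by
  by_cases h2 : q.2 = 0
  · refine ⟨q.1, fun h1 => hq (Prod.ext h1 h2), ?_⟩
    simp [projRatio, homCoord, h2, Prod.ext_iff]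
  · refine ⟨q.2, h2, ?_⟩
    simp [projRatio, homCoord, h2, mul_div_cancel₀]

lemma continuousAt_projRatio {q : K × K} (hq : q ≠ 0) : ContinuousAt projRatio q := by
  by_cases h2 : q.2 = 0
  · have h1 : q.1 ≠ 0 := fun h1 => hq (Prod.ext h1 h2)
    -- off the line `w = 0`, `z / w = (w / z)⁻¹` and `w / z → 0` through nonzero values
    have hdiv : Tendsto (fun r : K × K => r.2 / r.1) (𝓝 q ⊓ 𝓟 {r | ¬r.2 = 0}) (𝓝[≠] 0) := by
      refine tendsto_nhdsWithin_iff.2 ⟨?_, ?_⟩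
      · have hc : ContinuousAt (fun r : K × K => r.2 / r.1) q :=
          continuousAt_snd.div continuousAt_fst h1
        simpa [h2] using hc.tendsto.mono_left inf_le_left
      · filter_upwards [(continuousAt_fst.eventually_ne h1).filter_mono inf_le_left,
          mem_inf_of_right (mem_principal_self _)] with r hr1 hr2
        exact div_ne_zero hr2 hr1
    have hcocompact : Tendsto (fun r : K × K => r.1 / r.2) (𝓝 q ⊓ 𝓟 {r | ¬r.2 = 0})
        (coclosedCompact K) := by
      rw [coclosedCompact_eq_cocompact]
      refine (tendsto_inv₀_nhdsNE_zero.comp hdiv).mono_right Metric.cobounded_le_cocompact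
        |>.congr fun r => inv_div _ _
    simp only [ContinuousAt, projRatio, h2]
    exact tendsto_const_nhds.if (OnePoint.tendsto_coe_infty.comp hcocompact)
  · refine (OnePoint.continuous_coe.continuousAt.comp
      (continuousAt_fst.div continuousAt_snd h2)).congr ?_
    filter_upwards [continuousAt_snd.eventually_ne h2] with r hr
    simp [projRatio, hr]

end ProjRatio

section LogPolar

variable {V W : Type*} [NormedAddCommGroup V] [NormedSpace ℝ V] [NormedAddCommGroup W]
  [NormedSpace ℝ W]

def logPolar (v : V) : V × AddCircle (1 : ℝ) := (‖v‖⁻¹ • v, ↑(Real.logb 2 ‖v‖))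

lemma continuousAt_logPolar {v : V} (hv : v ≠ 0) : ContinuousAt logPolar v := by
  have hnorm : ‖v‖ ≠ 0 := norm_ne_zero_iff.2 hv
  exact ((continuous_norm.continuousAt.inv₀ hnorm).smul continuousAt_id).prodMk
    ((AddCircle.continuous_mk' 1).continuousAt.comp
      ((Real.continuousAt_logb hnorm).comp continuous_norm.continuousAt))

lemma coe_logb_eq_coe_logb_iff {r s : ℝ} (hr : 0 < r) (hs : 0 < s) :
    ((Real.logb 2 r : ℝ) : AddCircle (1 : ℝ)) = Real.logb 2 s ↔ ∃ k : ℤ, (2 : ℝ) ^ k * r = s := by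
  rw [← AddCommGroup.modEq_iff_eq_mod_zmultiples, AddCommGroup.modEq_iff_zsmul]
  refine exists_congr fun k => ?_
  rw [zsmul_one, eq_sub_iff_add_eq]
  constructor
  · intro h
    rw [← Real.rpow_logb two_pos (by norm_num) hs, ← h, Real.rpow_add two_pos, Real.rpow_intCast,
      Real.rpow_logb two_pos (by norm_num) hr]
  · rintro rfl
    rw [Real.logb_mul (by positivity) hr.ne', ← Real.rpow_intCast,
      Real.logb_rpow two_pos (by norm_num)]

lemma logPolar_eq_logPolar_iff {v w : V} (hv : v ≠ 0) (hw : w ≠ 0) :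
    logPolar v = logPolar w ↔ ∃ k : ℤ, (2 : ℝ) ^ k • v = w := by
  have hv' : 0 < ‖v‖ := norm_pos_iff.2 hv
  have hw' : 0 < ‖w‖ := norm_pos_iff.2 hw
  simp only [logPolar, Prod.mk.injEq, coe_logb_eq_coe_logb_iff hv' hw']
  constructor
  · rintro ⟨hdir, k, hk⟩
    refine ⟨k, ?_⟩
    calc (2 : ℝ) ^ k • v = ‖w‖ • ‖v‖⁻¹ • v := by
          rw [← hk, smul_smul, mul_assoc, mul_inv_cancel₀ hv'.ne', mul_one]
      _ = w := by rw [hdir, smul_smul, mul_inv_cancel₀ hw'.ne', one_smul]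
  · rintro ⟨k, rfl⟩
    have h2 : (0 : ℝ) < 2 ^ k := zpow_pos two_pos k
    have hn : ‖(2 : ℝ) ^ k • v‖ = 2 ^ k * ‖v‖ := by rw [norm_smul, Real.norm_of_nonneg h2.le]
    refine ⟨?_, k, hn.symm⟩
    rw [hn, smul_smul, mul_inv_rev, mul_assoc, inv_mul_cancel₀ h2.ne', mul_one]

lemma logPolar_map_eq_logPolar_map_iff {F : Type*} [FunLike F V W] [LinearMapClass F ℝ V W]
    (L : F) (hL : Function.Injective L) {v w : V}
    (hv : v ≠ 0) (hw : w ≠ 0) : logPolar (L v) = logPolar (L w) ↔ logPolar v = logPolar w := by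
  have h0 : ∀ {u : V}, u ≠ 0 → L u ≠ 0 := fun hu => (map_ne_zero_iff L hL).2 hu
  rw [logPolar_eq_logPolar_iff hv hw, logPolar_eq_logPolar_iff (h0 hv) (h0 hw)]
  simp only [← _root_.map_smul, hL.eq_iff]

end LogPolar

def expPolar (x : Circle × ℝ) : ℂ := (2 : ℝ) ^ x.2 • (x.1 : ℂ)

lemma continuous_expPolar : Continuous expPolar :=
  (continuous_const.rpow continuous_snd fun _ => Or.inl two_ne_zero).smul
    (continuous_subtype_val.comp continuous_fst)

lemma expPolar_ne_zero (x : Circle × ℝ) : expPolar x ≠ 0 :=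
  smul_ne_zero (by positivity) (Circle.coe_ne_zero _)

lemma logPolar_expPolar (x : Circle × ℝ) :
    logPolar (expPolar x) = ((x.1 : ℂ), ((x.2 : ℝ) : AddCircle (1 : ℝ))) := by
  have h2 : (0 : ℝ) < 2 ^ x.2 := by positivity
  have hn : ‖expPolar x‖ = 2 ^ x.2 := by
    rw [expPolar, norm_smul, Circle.norm_coe, mul_one, Real.norm_of_nonneg h2.le]
  rw [logPolar, hn, expPolar, smul_smul, inv_mul_cancel₀ h2.ne', one_smul,
    Real.logb_rpow two_pos (by norm_num)]

lemma exists_expPolar_eq {c : ℂ} (hc : c ≠ 0) : ∃ x, expPolar x = c := by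
  refine ⟨(Circle.exp (Complex.arg c), Real.logb 2 ‖c‖), ?_⟩
  rw [expPolar, Circle.coe_exp, Real.rpow_logb two_pos (by norm_num) (norm_pos_iff.2 hc),
    Complex.real_smul]
  exact Complex.norm_mul_exp_arg_mul_I c

def coords : E ≃L[ℂ] ℂ × ℂ :=
  (EuclideanSpace.equiv (Fin 2) ℂ).trans (ContinuousLinearEquiv.finTwoArrow ℂ ℂ)

lemma g_eq_projRatio_coords (v : X₀) : g v = projRatio (coords v) := rfl

lemma continuous_g : Continuous g :=
  continuous_iff_continuousAt.2 fun v =>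
    ContinuousAt.comp (f := fun v : X₀ => coords v)
      (continuousAt_projRatio ((map_ne_zero_iff coords coords.injective).2 v.2)) (by fun_prop)

lemma g_eq_of_orbitRel₂ {v w : X₀} (h : orbitRel₂ v w) : g v = g w := by
  obtain ⟨k, hk⟩ := h
  rw [g_eq_projRatio_coords, g_eq_projRatio_coords, ← hk, LinearMapClass.map_smul_of_tower,
    ← Complex.coe_smul, projRatio_smul (Complex.ofReal_ne_zero.2 (by positivity))]

def gQuot : Quot orbitRel₂ → OnePoint ℂ := Quot.lift g fun _ _ => g_eq_of_orbitRel₂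

lemma continuous_gQuot : Continuous gQuot := continuous_quot_lift _ continuous_g

def lineEmbedding (p : OnePoint ℂ) : ℂ →L[ℂ] E :=
  coords.symm.toContinuousLinearMap.comp (ContinuousLinearMap.toSpanSingleton ℂ (homCoord p))

lemma lineEmbedding_apply (p : OnePoint ℂ) (c : ℂ) :
    lineEmbedding p c = coords.symm (c • homCoord p) := rfl

lemma lineEmbedding_injective (p : OnePoint ℂ) : Function.Injective (lineEmbedding p) :=
  coords.symm.injective.comp (smul_left_injective ℂ (homCoord_ne_zero p))

lemma lineEmbedding_ne_zero (p : OnePoint ℂ) {c : ℂ} (hc : c ≠ 0) : lineEmbedding p c ≠ 0 :=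
  (map_ne_zero_iff _ (lineEmbedding_injective p)).2 hc

lemma g_lineEmbedding (p : OnePoint ℂ) {c : ℂ} (hc : c ≠ 0) :
    g ⟨lineEmbedding p c, lineEmbedding_ne_zero p hc⟩ = p := by
  rw [g_eq_projRatio_coords]
  simp only [lineEmbedding_apply, ContinuousLinearEquiv.apply_symm_apply]
  rw [projRatio_smul hc, projRatio_homCoord]

lemma exists_lineEmbedding_eq (v : X₀) : ∃ c ≠ (0 : ℂ), lineEmbedding (g v) c = v := by
  obtain ⟨c, hc, hv⟩ := exists_eq_smul_homCoord ((map_ne_zero_iff coords coords.injective).2 v.2)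
  exact ⟨c, hc, by rw [lineEmbedding_apply, g_eq_projRatio_coords, ← hv, coords.symm_apply_apply]⟩

def orbitLogPolar : Quot orbitRel₂ → E × AddCircle (1 : ℝ) :=
  Quot.lift (fun v => logPolar (v : E)) fun v w h => (logPolar_eq_logPolar_iff v.2 w.2).2 h

lemma orbitLogPolar_injective : Function.Injective orbitLogPolar := by
  rintro ⟨v⟩ ⟨w⟩ h
  exact Quot.sound ((logPolar_eq_logPolar_iff v.2 w.2).1 h)

lemma continuous_orbitLogPolar : Continuous orbitLogPolar :=
  continuous_quot_lift _ <| continuous_iff_continuousAt.2 fun v =>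
    ContinuousAt.comp (f := fun v : X₀ => (v : E)) (continuousAt_logPolar v.2)
      continuous_subtype_val.continuousAt

instance : T2Space (Quot orbitRel₂) :=
  .of_injective_continuous orbitLogPolar_injective continuous_orbitLogPolar

def fiberParam (p : OnePoint ℂ) (x : Circle × ℝ) : Quot orbitRel₂ :=
  Quot.mk _ ⟨lineEmbedding p (expPolar x), lineEmbedding_ne_zero p (expPolar_ne_zero x)⟩

lemma continuous_fiberParam (p : OnePoint ℂ) : Continuous (fiberParam p) :=
  continuous_quot_mk.comp <| ((lineEmbedding p).continuous.comp continuous_expPolar).subtype_mk _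

lemma fiberParam_eq_iff (p : OnePoint ℂ) (x y : Circle × ℝ) :
    fiberParam p x = fiberParam p y ↔
      Prod.map id ((↑) : ℝ → AddCircle (1 : ℝ)) x = Prod.map id (↑) y := by
  rw [← orbitLogPolar_injective.eq_iff]
  change logPolar ((lineEmbedding p).restrictScalars ℝ (expPolar x)) =
    logPolar ((lineEmbedding p).restrictScalars ℝ (expPolar y)) ↔ _
  rw [logPolar_map_eq_logPolar_map_iff ((lineEmbedding p).restrictScalars ℝ)
    (lineEmbedding_injective p) (expPolar_ne_zero x)
    (expPolar_ne_zero y), logPolar_expPolar, logPolar_expPolar]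
  simp [Prod.ext_iff, Circle.ext_iff]

lemma fiberParam_mem_fiber (p : OnePoint ℂ) (x : Circle × ℝ) :
    fiberParam p x ∈ gQuot ⁻¹' {p} :=
  g_lineEmbedding p (expPolar_ne_zero x)

lemma exists_fiberParam_eq {p : OnePoint ℂ} {q : Quot orbitRel₂}
    (hq : q ∈ gQuot ⁻¹' {p}) : ∃ x, fiberParam p x = q := by
  obtain ⟨v⟩ := q
  obtain ⟨c, hc, hcv⟩ := exists_lineEmbedding_eq v
  obtain ⟨x, rfl⟩ := exists_expPolar_eq hc
  exact ⟨x, by subst hq; exact congrArg (Quot.mk _) (Subtype.ext hcv)⟩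

lemma nonempty_fiber_homeomorph_torus (p : OnePoint ℂ) :
    Nonempty ((gQuot ⁻¹' {p}) ≃ₜ Circle × Circle) := by
  have hπ : IsQuotientMap (Prod.map id ((↑) : ℝ → AddCircle (1 : ℝ)) : Circle × ℝ → _) :=
    (IsOpenQuotientMap.id.prodMap (QuotientAddGroup.isOpenQuotientMap_mk)).isQuotientMap
  obtain ⟨e⟩ := hπ.nonempty_homeomorph_of_eq_iff
    ((continuous_fiberParam p).subtype_mk (fiberParam_mem_fiber p))
    (fun q => (exists_fiberParam_eq q.2).imp fun x hx => Subtype.ext hx)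
    fun x y => Subtype.ext_iff.trans (fiberParam_eq_iff p x y)
  exact ⟨e.symm.trans
    ((Homeomorph.refl Circle).prodCongr (AddCircle.homeomorphCircle one_ne_zero))⟩

/-- The map `g : X₀ → ℙ¹(ℂ)`, `(z, w) ↦ z/w` (and `∞` when `w = 0`), is continuous and
`ℤ`-invariant, hence descends to a continuous surjection `f` from the orbit space `X₀ / ℤ`
onto `OnePoint ℂ`, all of whose fibers are homeomorphic to the torus `S¹ × S¹`. -/
theorem g_descends_to_torus_fibration :
    Continuous g ∧
    (∀ v w : X₀, orbitRel₂ v w → g v = g w) ∧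
    ∃ f : Quot orbitRel₂ → OnePoint ℂ,
      Continuous f ∧ Function.Surjective f ∧
      (∀ v : X₀, f (Quot.mk orbitRel₂ v) = g v) ∧
      ∀ p : OnePoint ℂ, Nonempty ((f ⁻¹' {p}) ≃ₜ Circle × Circle) :=
  ⟨continuous_g, fun _ _ => g_eq_of_orbitRel₂, gQuot, continuous_gQuot,
    fun p => ⟨Quot.mk _ _, g_lineEmbedding p one_ne_zero⟩, fun _ => rfl,
    nonempty_fiber_homeomorph_torus⟩
end
end
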